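/- Let I ⊆ ℝ be an open interval and f, g : I → ℝ smooth with f > 0 and g' ≠ 0 on I. Then, as differential operators on smooth functions F(t,x,u) on ℝ × I × ℝ, the commutators satisfy: X₁(X₃F) − X₃(X₁F) = 4·X₁F, X₃(X₄F) − X₄(X₃F) = −2·X₄F, and X₁(X₂F) − X₂(X₁F) = 0, X₁(X₄F) − X₄(X₁F) = 0, X₂(X₃F) − X₃(X₂F) = 0, X₂(X₄F) − X₄(X₂F) = 0, for every smooth F. (That is, the only nonzero commutation relations among the symmetry generators are [X₁,X₃] = 4X₁ and [X₃,X₄] = −2X₄.) -/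

import Mathlib

/-- The operator `X₁F = ∂F/∂t`. -/
noncomputable def X1 (F : ℝ → ℝ → ℝ → ℝ) (t x u : ℝ) : ℝ :=
  deriv (fun s => F s x u) t

/-- The operator `X₂F = u·∂F/∂u`. -/
noncomputable def X2 (F : ℝ → ℝ → ℝ → ℝ) (t x u : ℝ) : ℝ :=
  u * deriv (fun v => F t x v) u

/-- The operator `X₃F = 4t·F_t + (2g/g')·F_x − (f'g/(fg') + 3g·g''/g'²)·u·F_u`. -/
noncomputable def X3 (f g : ℝ → ℝ) (F : ℝ → ℝ → ℝ → ℝ) (t x u : ℝ) : ℝ :=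
  4 * t * deriv (fun s => F s x u) t
    + (2 * g x / deriv g x) * deriv (fun y => F t y u) x
    - (deriv f x * g x / (f x * deriv g x)
        + 3 * g x * (deriv^[2] g x) / (deriv g x)^2) * u * deriv (fun v => F t x v) u

/-- The operator `X₄F = (2/g')·F_x − (f'/(fg') + 3g''/g'²)·u·F_u`. -/
noncomputable def X4 (f g : ℝ → ℝ) (F : ℝ → ℝ → ℝ → ℝ) (t x u : ℝ) : ℝ :=
  (2 / deriv g x) * deriv (fun y => F t y u) x
    - (deriv f x / (f x * deriv g x)
        + 3 * (deriv^[2] g x) / (deriv g x)^2) * u * deriv (fun v => F t x v) u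

/-!
Each `Xᵢ` is differentiation along a vector field of the form
`(α + β t) ∂ₜ + a(x) ∂ₓ + b(x) u ∂ᵤ` on `ℝ × ℝ × ℝ`. By symmetry of second derivatives, the
commutator of two such derivations applied to a `C²` function is differentiation along the Lie
bracket of the fields, and this family of fields is closed under brackets: `∂ₜ` brackets
with a member to `β ∂ₜ`, while `u ∂ᵤ` commutes with every member. Finally `X₃ = 4t ∂ₜ + g X₄`, so
`[X₃, X₄] = -X₄(g) X₄ = -(2 / g') g' X₄ = -2 X₄`.
-/

open VectorField

theorem ContDiffOn.differentiableAt_iterate_deriv {𝕜 : Type*} [NontriviallyNormedField 𝕜]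
    {f : 𝕜 → 𝕜} {s : Set 𝕜} {n : WithTop ℕ∞} {k : ℕ} {x : 𝕜}
    (hf : ContDiffOn 𝕜 n f s) (hk : k < n) (hs : IsOpen s) (hx : x ∈ s) :
    DifferentiableAt 𝕜 (deriv^[k] f) x :=
  ((hf.differentiableOn_iteratedDerivWithin hk hs.uniqueDiffOn).congr
    (iteratedDerivWithin_of_isOpen_eq_iterate hs).symm).differentiableAt (hs.mem_nhds hx)

def uncurry3 {α β γ δ : Type*} (F : α → β → γ → δ) (p : α × β × γ) : δ := F p.1 p.2.1 p.2.2

theorem fderiv_uncurry3_apply {G : ℝ → ℝ → ℝ → ℝ} {t x u : ℝ}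
    (hG : DifferentiableAt ℝ (uncurry3 G) (t, x, u)) (v : ℝ × ℝ × ℝ) :
    fderiv ℝ (uncurry3 G) (t, x, u) v = v.1 * deriv (fun s => G s x u) t
      + v.2.1 * deriv (fun y => G t y u) x + v.2.2 * deriv (fun w => G t x w) u := by
  have ht : HasDerivAt (fun s => G s x u) (fderiv ℝ (uncurry3 G) (t, x, u) (1, 0, 0)) t :=
    hG.hasFDerivAt.comp_hasDerivAt_of_eq t
      ((hasDerivAt_id' t).prodMk ((hasDerivAt_const t x).prodMk (hasDerivAt_const t u))) rfl
  have hx : HasDerivAt (fun y => G t y u) (fderiv ℝ (uncurry3 G) (t, x, u) (0, 1, 0)) x :=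
    hG.hasFDerivAt.comp_hasDerivAt_of_eq x
      ((hasDerivAt_const x t).prodMk ((hasDerivAt_id' x).prodMk (hasDerivAt_const x u))) rfl
  have hu : HasDerivAt (fun w => G t x w) (fderiv ℝ (uncurry3 G) (t, x, u) (0, 0, 1)) u :=
    hG.hasFDerivAt.comp_hasDerivAt_of_eq u
      ((hasDerivAt_const u t).prodMk ((hasDerivAt_const u x).prodMk (hasDerivAt_id' u))) rfl
  have hv : v = v.1 • ((1, 0, 0) : ℝ × ℝ × ℝ) + v.2.1 • (0, 1, 0) + v.2.2 • (0, 0, 1) := by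
    ext <;> simp
  rw [ht.deriv, hx.deriv, hu.deriv]
  conv_lhs => rw [hv]
  simp only [map_add, map_smul, smul_eq_mul]

def IsDerivAlong (L : (ℝ → ℝ → ℝ → ℝ) → ℝ → ℝ → ℝ → ℝ) (V : ℝ × ℝ × ℝ → ℝ × ℝ × ℝ) : Prop :=
  ∀ G t x u, DifferentiableAt ℝ (uncurry3 G) (t, x, u) →
    L G t x u = fderiv ℝ (uncurry3 G) (t, x, u) (V (t, x, u))

namespace IsDerivAlong

variable {L M : (ℝ → ℝ → ℝ → ℝ) → ℝ → ℝ → ℝ → ℝ} {V W : ℝ × ℝ × ℝ → ℝ × ℝ × ℝ}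

theorem uncurry3_eq (hL : IsDerivAlong L V) {G : ℝ → ℝ → ℝ → ℝ}
    (hG : Differentiable ℝ (uncurry3 G)) :
    uncurry3 (L G) = fun q => fderiv ℝ (uncurry3 G) q (V q) :=
  funext fun q => hL G q.1 q.2.1 q.2.2 (hG q)

theorem commutator (hL : IsDerivAlong L V) (hM : IsDerivAlong M W)
    {F : ℝ → ℝ → ℝ → ℝ} (hF : ContDiff ℝ 2 (uncurry3 F)) {t x u : ℝ}
    (hV : DifferentiableAt ℝ V (t, x, u)) (hW : DifferentiableAt ℝ W (t, x, u)) :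
    L (M F) t x u - M (L F) t x u =
      fderiv ℝ (uncurry3 F) (t, x, u) (lieBracket ℝ V W (t, x, u)) := by
  have hP : Differentiable ℝ (uncurry3 F) := hF.differentiable (by norm_num)
  have hP' : Differentiable ℝ (fderiv ℝ (uncurry3 F)) :=
    (hF.fderiv_right (m := 1) (by norm_num)).differentiable one_ne_zero
  rw [hL _ t x u (by rw [hM.uncurry3_eq hP]; exact (hP' _).clm_apply hW),
    hM _ t x u (by rw [hL.uncurry3_eq hP]; exact (hP' _).clm_apply hV),
    hM.uncurry3_eq hP, hL.uncurry3_eq hP, fderiv_apply_lieBracket hF.contDiffAt (by simp) hW hV]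

theorem commutator_eq_smul {N : (ℝ → ℝ → ℝ → ℝ) → ℝ → ℝ → ℝ → ℝ} {Z : ℝ × ℝ × ℝ → ℝ × ℝ × ℝ}
    (hL : IsDerivAlong L V) (hM : IsDerivAlong M W) (hN : IsDerivAlong N Z)
    {F : ℝ → ℝ → ℝ → ℝ} (hF : ContDiff ℝ 2 (uncurry3 F)) {t x u c : ℝ}
    (hV : DifferentiableAt ℝ V (t, x, u)) (hW : DifferentiableAt ℝ W (t, x, u))
    (hVW : lieBracket ℝ V W (t, x, u) = c • Z (t, x, u)) :
    L (M F) t x u - M (L F) t x u = c * N F t x u := by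
  rw [hL.commutator hM hF hV hW, hVW, map_smul, smul_eq_mul,
    hN F t x u (hF.differentiable (by norm_num) _)]

end IsDerivAlong

def generatorField (α β : ℝ) (a b : ℝ → ℝ) (p : ℝ × ℝ × ℝ) : ℝ × ℝ × ℝ :=
  (α + β * p.1, a p.2.1, b p.2.1 * p.2.2)

theorem fderiv_generatorField_apply {α β : ℝ} {a b : ℝ → ℝ} {p : ℝ × ℝ × ℝ}
    (ha : DifferentiableAt ℝ a p.2.1) (hb : DifferentiableAt ℝ b p.2.1) (v : ℝ × ℝ × ℝ) :
    fderiv ℝ (generatorField α β a b) p v =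
      (β * v.1, deriv a p.2.1 * v.2.1, deriv b p.2.1 * v.2.1 * p.2.2 + b p.2.1 * v.2.2) := by
  have h1 : HasFDerivAt (fun q : ℝ × ℝ × ℝ => α + β * q.1) _ p :=
    ((hasFDerivAt_fst (𝕜 := ℝ) (p := p)).const_mul β).const_add α
  have hx : HasFDerivAt (fun q : ℝ × ℝ × ℝ => q.2.1) _ p := (hasFDerivAt_snd (𝕜 := ℝ) (p := p)).fst
  have hu : HasFDerivAt (fun q : ℝ × ℝ × ℝ => q.2.2) _ p := (hasFDerivAt_snd (𝕜 := ℝ) (p := p)).snd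
  have h2 := ha.hasDerivAt.comp_hasFDerivAt p hx
  have h3 := (hb.hasDerivAt.comp_hasFDerivAt p hx).mul hu
  have hV : HasFDerivAt (generatorField α β a b) _ p := h1.prodMk (h2.prodMk h3)
  rw [hV.fderiv]
  simp only [Function.comp_apply, ContinuousLinearMap.prod_apply, smul_apply,
    ContinuousLinearMap.coe_fst', smul_eq_mul, ContinuousLinearMap.comp_apply,
    ContinuousLinearMap.coe_snd', add_apply, Prod.mk.injEq, true_and]
  ring

theorem differentiableAt_generatorField {α β : ℝ} {a b : ℝ → ℝ} {p : ℝ × ℝ × ℝ}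
    (ha : DifferentiableAt ℝ a p.2.1) (hb : DifferentiableAt ℝ b p.2.1) :
    DifferentiableAt ℝ (generatorField α β a b) p := by
  unfold generatorField
  fun_prop

theorem lieBracket_generatorField {α β α' β' : ℝ} {a b a' b' : ℝ → ℝ} {p : ℝ × ℝ × ℝ}
    (ha : DifferentiableAt ℝ a p.2.1) (hb : DifferentiableAt ℝ b p.2.1)
    (ha' : DifferentiableAt ℝ a' p.2.1) (hb' : DifferentiableAt ℝ b' p.2.1) :
    lieBracket ℝ (generatorField α β a b) (generatorField α' β' a' b') p =
      generatorField (α * β' - α' * β) 0 (fun y => a y * deriv a' y - a' y * deriv a y)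
        (fun y => a y * deriv b' y - a' y * deriv b y) p := by
  rw [lieBracket, fderiv_generatorField_apply ha hb, fderiv_generatorField_apply ha' hb']
  simp only [generatorField, Prod.mk_sub_mk, Prod.mk.injEq]
  refine ⟨by ring, by ring, by ring⟩

theorem lieBracket_generatorField_mul_left {β : ℝ} {c a b : ℝ → ℝ} {p : ℝ × ℝ × ℝ}
    (hc : DifferentiableAt ℝ c p.2.1)
    (ha : DifferentiableAt ℝ a p.2.1) (hb : DifferentiableAt ℝ b p.2.1) :
    lieBracket ℝ (generatorField 0 β (fun y => c y * a y) (fun y => c y * b y))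
        (generatorField 0 0 a b) p =
      -(deriv c p.2.1 * a p.2.1) • generatorField 0 0 a b p := by
  rw [lieBracket_generatorField (a := fun y => c y * a y) (b := fun y => c y * b y)
    (hc.mul ha) (hc.mul hb) ha hb]
  simp only [generatorField, Prod.smul_mk, smul_eq_mul, Prod.mk.injEq]
  rw [deriv_fun_mul hc ha, deriv_fun_mul hc hb]
  refine ⟨by ring, by ring, by ring⟩

theorem lieBracket_generatorField_translation {α' β' : ℝ} {a' b' : ℝ → ℝ} {p : ℝ × ℝ × ℝ}
    (ha' : DifferentiableAt ℝ a' p.2.1) (hb' : DifferentiableAt ℝ b' p.2.1) :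
    lieBracket ℝ (generatorField 1 0 (fun _ => 0) (fun _ => 0)) (generatorField α' β' a' b') p =
      β' • generatorField 1 0 (fun _ => 0) (fun _ => 0) p := by
  rw [lieBracket_generatorField (differentiableAt_const _) (differentiableAt_const _) ha' hb']
  simp [generatorField]

theorem lieBracket_generatorField_scaling {α' β' : ℝ} {a' b' : ℝ → ℝ} {p : ℝ × ℝ × ℝ}
    (ha' : DifferentiableAt ℝ a' p.2.1) (hb' : DifferentiableAt ℝ b' p.2.1) :
    lieBracket ℝ (generatorField 0 0 (fun _ => 0) (fun _ => 1)) (generatorField α' β' a' b') p =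
      0 := by
  rw [lieBracket_generatorField (differentiableAt_const _) (differentiableAt_const _) ha' hb']
  simp [generatorField]

noncomputable def coeffX4 (g : ℝ → ℝ) (y : ℝ) : ℝ := 2 / deriv g y

noncomputable def coeffU4 (f g : ℝ → ℝ) (y : ℝ) : ℝ :=
  -(deriv f y / (f y * deriv g y) + 3 * deriv^[2] g y / deriv g y ^ 2)

theorem differentiableAt_coeffX4 {g : ℝ → ℝ} {x : ℝ} (hg₁ : DifferentiableAt ℝ (deriv g) x)
    (hg' : deriv g x ≠ 0) : DifferentiableAt ℝ (coeffX4 g) x :=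
  (differentiableAt_const 2).div hg₁ hg'

theorem differentiableAt_coeffU4 {f g : ℝ → ℝ} {x : ℝ} (hf₀ : DifferentiableAt ℝ f x)
    (hf₁ : DifferentiableAt ℝ (deriv f) x) (hg₁ : DifferentiableAt ℝ (deriv g) x)
    (hg₂ : DifferentiableAt ℝ (deriv^[2] g) x) (hf : f x ≠ 0) (hg' : deriv g x ≠ 0) :
    DifferentiableAt ℝ (coeffU4 f g) x :=
  ((hf₁.div (hf₀.mul hg₁) (mul_ne_zero hf hg')).add
    (((differentiableAt_const 3).mul hg₂).div (hg₁.pow 2) (pow_ne_zero 2 hg'))).neg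

theorem isDerivAlong_X1 : IsDerivAlong X1 (generatorField 1 0 (fun _ => 0) (fun _ => 0)) := by
  intro G t x u hG
  rw [fderiv_uncurry3_apply hG]
  simp [X1, generatorField]

theorem isDerivAlong_X2 : IsDerivAlong X2 (generatorField 0 0 (fun _ => 0) (fun _ => 1)) := by
  intro G t x u hG
  rw [fderiv_uncurry3_apply hG]
  simp [X2, generatorField]

theorem isDerivAlong_X3 (f g : ℝ → ℝ) : IsDerivAlong (X3 f g)
    (generatorField 0 4 (fun y => g y * coeffX4 g y) (fun y => g y * coeffU4 f g y)) := by
  intro G t x u hG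
  rw [fderiv_uncurry3_apply hG]
  simp only [X3, generatorField, coeffX4, coeffU4]
  ring

theorem isDerivAlong_X4 (f g : ℝ → ℝ) :
    IsDerivAlong (X4 f g) (generatorField 0 0 (coeffX4 g) (coeffU4 f g)) := by
  intro G t x u hG
  rw [fderiv_uncurry3_apply hG]
  simp only [X4, generatorField, coeffX4, coeffU4]
  ring

theorem statement4_general
    (I : Set ℝ) (hIopen : IsOpen I)
    (f g : ℝ → ℝ)
    (hf : ContDiffOn ℝ (⊤ : ℕ∞) f I) (hg : ContDiffOn ℝ (⊤ : ℕ∞) g I)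
    (hfpos : ∀ x ∈ I, 0 < f x) (hg' : ∀ x ∈ I, deriv g x ≠ 0) :
    ∀ F : ℝ → ℝ → ℝ → ℝ,
      ContDiff ℝ (⊤ : ℕ∞) (fun p : ℝ × ℝ × ℝ => F p.1 p.2.1 p.2.2) →
      ∀ t : ℝ, ∀ x ∈ I, ∀ u : ℝ,
        X1 (X3 f g F) t x u - X3 f g (X1 F) t x u = 4 * X1 F t x u ∧
        X3 f g (X4 f g F) t x u - X4 f g (X3 f g F) t x u = -2 * X4 f g F t x u ∧
        X1 (X2 F) t x u - X2 (X1 F) t x u = 0 ∧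
        X1 (X4 f g F) t x u - X4 f g (X1 F) t x u = 0 ∧
        X2 (X3 f g F) t x u - X3 f g (X2 F) t x u = 0 ∧
        X2 (X4 f g F) t x u - X4 f g (X2 F) t x u = 0 := by
  intro F hF t x hx u
  have hF2 : ContDiff ℝ 2 (uncurry3 F) := hF.of_le (by norm_cast)
  have hderiv : ∀ {h : ℝ → ℝ}, ContDiffOn ℝ (⊤ : ℕ∞) h I → ∀ k : ℕ,
      DifferentiableAt ℝ (deriv^[k] h) x :=
    fun hh k => hh.differentiableAt_iterate_deriv (by exact_mod_cast WithTop.coe_lt_top k) hIopen hx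
  have hgx : DifferentiableAt ℝ g x := hderiv hg 0
  have ha := differentiableAt_coeffX4 (hderiv hg 1) (hg' x hx)
  have hb := differentiableAt_coeffU4 (hderiv hf 0) (hderiv hf 1) (hderiv hg 1) (hderiv hg 2)
    (hfpos x hx).ne' (hg' x hx)
  have h0 : DifferentiableAt ℝ (fun _ => (0 : ℝ)) x := differentiableAt_const _
  have h1 : DifferentiableAt ℝ (fun _ => (1 : ℝ)) x := differentiableAt_const _
  have hV1 := differentiableAt_generatorField (α := 1) (β := 0) (p := (t, x, u)) h0 h0
  have hV2 := differentiableAt_generatorField (α := 0) (β := 0) (p := (t, x, u)) h0 h1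
  have hV3 := differentiableAt_generatorField (α := 0) (β := 4) (p := (t, x, u))
    (hgx.mul ha) (hgx.mul hb)
  have hV4 := differentiableAt_generatorField (α := 0) (β := 0) (p := (t, x, u)) ha hb
  refine ⟨?_, ?_, ?_, ?_, ?_, ?_⟩
  · exact isDerivAlong_X1.commutator_eq_smul (isDerivAlong_X3 f g) isDerivAlong_X1 hF2 hV1 hV3
      (lieBracket_generatorField_translation (hgx.mul ha) (hgx.mul hb))
  · refine (isDerivAlong_X3 f g).commutator_eq_smul (isDerivAlong_X4 f g) (isDerivAlong_X4 f g)
      hF2 hV3 hV4 ?_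
    rw [lieBracket_generatorField_mul_left hgx ha hb, coeffX4, mul_div_cancel₀ _ (hg' x hx)]
  · exact (isDerivAlong_X1.commutator_eq_smul isDerivAlong_X2 isDerivAlong_X1 hF2 hV1 hV2
      (lieBracket_generatorField_translation h0 h1)).trans (zero_mul _)
  · exact (isDerivAlong_X1.commutator_eq_smul (isDerivAlong_X4 f g) isDerivAlong_X1 hF2 hV1 hV4
      (lieBracket_generatorField_translation ha hb)).trans (zero_mul _)
  · rw [isDerivAlong_X2.commutator (isDerivAlong_X3 f g) hF2 hV2 hV3,
      lieBracket_generatorField_scaling (hgx.mul ha) (hgx.mul hb), map_zero]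
  · rw [isDerivAlong_X2.commutator (isDerivAlong_X4 f g) hF2 hV2 hV4,
      lieBracket_generatorField_scaling ha hb, map_zero]

/-- the only nonzero commutation relations among the symmetry
generators are `[X₁,X₃] = 4X₁` and `[X₃,X₄] = −2X₄`. -/
theorem statement4
    (I : Set ℝ) (hIopen : IsOpen I) (hIinterval : I.OrdConnected)
    (f g : ℝ → ℝ)
    (hf : ContDiffOn ℝ (⊤ : ℕ∞) f I) (hg : ContDiffOn ℝ (⊤ : ℕ∞) g I)
    (hfpos : ∀ x ∈ I, 0 < f x) (hg' : ∀ x ∈ I, deriv g x ≠ 0) :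
    ∀ F : ℝ → ℝ → ℝ → ℝ,
      ContDiff ℝ (⊤ : ℕ∞) (fun p : ℝ × ℝ × ℝ => F p.1 p.2.1 p.2.2) →
      ∀ t : ℝ, ∀ x ∈ I, ∀ u : ℝ,
        X1 (X3 f g F) t x u - X3 f g (X1 F) t x u = 4 * X1 F t x u ∧
        X3 f g (X4 f g F) t x u - X4 f g (X3 f g F) t x u = -2 * X4 f g F t x u ∧
        X1 (X2 F) t x u - X2 (X1 F) t x u = 0 ∧
        X1 (X4 f g F) t x u - X4 f g (X1 F) t x u = 0 ∧
        X2 (X3 f g F) t x u - X3 f g (X2 F) t x u = 0 ∧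
        X2 (X4 f g F) t x u - X4 f g (X2 F) t x u = 0 :=
  statement4_general I hIopen f g hf hg hfpos hg'
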